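/- arXiv:math/9904095 — 5 statements merged into one kernel-verified Lean document; each statement's English description precedes it below -/
import Mathlib

section
/- Let f_{y,a}(z) = ∑_{n≥0} C(y-a(n-1), n) z^n and g_{y,a}(z) = ∑_{n≥0} (y/(y-an)) C(y-an, n) z^n as formal power series in z over ℚ(y)[a] (or with y,a rational and y-an ≠ 0). Then the derivative satisfies g'_{y,a}(z) = y·f_{y-2a-1,a}(z). -/
open PowerSeries Finset

/-- Generalized binomial coefficient `C(x,n) = x(x-1)⋯(x-n+1)/n!`. -/
noncomputable def gchoose (x : ℚ) (n : ℕ) : ℚ :=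
  (∏ i ∈ Finset.range n, (x - i)) / n.factorial

/-- `f_{y,a}(z) = ∑_{n≥0} C(y-a(n-1),n) z^n`. -/
noncomputable def fSeries (y a : ℚ) : PowerSeries ℚ :=
  PowerSeries.mk fun n => gchoose (y - a * ((n : ℚ) - 1)) n

/-- `g_{y,a}(z) = ∑_{n≥0} (y/(y-an)) C(y-an,n) z^n`, with the `n`-th coefficient
interpreted as `y·C(y-an-1,n-1)/n` for `n ≥ 1` and constant term `1`. -/
noncomputable def gSeries (y a : ℚ) : PowerSeries ℚ :=
  PowerSeries.mk fun n =>
    if n = 0 then 1 else y * gchoose (y - a * (n : ℚ) - 1) (n - 1) / (n : ℚ)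

lemma coeff_gSeries_succ (y a : ℚ) (n : ℕ) :
    coeff (n + 1) (gSeries y a) = y * gchoose (y - a * (n + 1) - 1) n / (n + 1) := by
  simp [gSeries]

lemma coeff_fSeries (y a : ℚ) (n : ℕ) :
    coeff n (fSeries y a) = gchoose (y - a * ((n : ℚ) - 1)) n :=
  coeff_mk _ _

/-- The formal derivative satisfies `g'_{y,a}(z) = y · f_{y-2a-1,a}(z)`. -/
theorem stmt2 (y a : ℚ) :
    d⁄dX ℚ (gSeries y a) = PowerSeries.C y * fSeries (y - 2 * a - 1) a := by
  ext n
  rw [coeff_derivative, coeff_gSeries_succ, coeff_C_mul, coeff_fSeries]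
  have h_arg : y - a * ((n : ℚ) + 1) - 1 = y - 2 * a - 1 - a * ((n : ℚ) - 1) := by ring
  rw [h_arg]
  field_simp
end

section
/- Define g_{y,a}(z) = ∑_{n≥0} (y/(y-an)) C(y-an,n) z^n (with nth coefficient interpreted as y·C(y-an-1,n-1)/n for n≥1, constant term 1). Then g_{y,a} = (g_{1,a})^y in the sense that for all rational y, g_{y,a}(z) equals the y-th power series power (1+w)^y := ∑_k C(y,k) w^k where g_{1,a} = 1 + w with w a power series with zero constant term. -/
open PowerSeries Finset

/-- The binomial-series power `(1+w)^y := ∑_k C(y,k) w^k` of `1 + w`, for `w` a power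
series with zero constant term (the coefficient of `z^n` in `w^k` vanishes for `k > n`,
so each coefficient is the indicated finite sum). -/
noncomputable def binPow (w : PowerSeries ℚ) (y : ℚ) : PowerSeries ℚ :=
  PowerSeries.mk fun n =>
    ∑ k ∈ Finset.range (n + 1), gchoose y k * PowerSeries.coeff n (w ^ k)

/-! The coefficients of `g_{y,a}` and of `(1 + w)^y` are polynomials in `y`, so it suffices to
compare them at `y = m ∈ ℕ`, where the binomial series is `(1 + w)^m` by the binomial theorem.
It remains to see `g_{m,a} = g_{1,a}^m`, i.e. Rothe's identity `g_{x+y,a} = g_{x,a} g_{y,a}`.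
Pascal's rule gives the recurrence `g_{t,a} = g_{t-1,a} + z g_{t-1-a,a}`; by induction on `n`,
the `n`-th coefficient of `g_{x,a} g_{t,a} - g_{x+t,a}` is then a polynomial in `t` that is
invariant under `t ↦ t - 1` and vanishes at `t = 0`, hence is zero. -/

lemma gchoose_eq_eval (x : ℚ) (n : ℕ) :
    gchoose x n = (descPochhammer ℚ n).eval x / n.factorial := by
  rw [gchoose, descPochhammer_eval_eq_prod_range]

lemma gchoose_eq_ringChoose (x : ℚ) (n : ℕ) : gchoose x n = Ring.choose x n := by
  rw [Ring.choose_eq_smul, gchoose_eq_eval, smul_eq_mul, inv_mul_eq_div,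
    ← descPochhammer_map (Int.castRingHom ℚ), Polynomial.eval_map, ← Polynomial.aeval_eq_smeval,
    Polynomial.aeval_def]
  rfl

lemma gchoose_succ (x : ℚ) (n : ℕ) :
    gchoose x (n + 1) = gchoose x n * (x - n) / (n + 1) := by
  rw [gchoose, gchoose, prod_range_succ, Nat.factorial_succ]
  push_cast
  rw [div_mul_eq_mul_div, div_div, mul_comm ((n : ℚ) + 1)]

lemma gchoose_natCast (m k : ℕ) : gchoose m k = m.choose k := by
  rw [gchoose_eq_ringChoose, Ring.choose_natCast]

lemma gchoose_add_one_succ (x : ℚ) (n : ℕ) :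
    gchoose (x + 1) (n + 1) = gchoose x n + gchoose x (n + 1) := by
  simp only [gchoose_eq_ringChoose, Ring.choose_succ_succ]

noncomputable def polyFun : Subalgebra ℚ (ℚ → ℚ) := (Polynomial.aeval (id : ℚ → ℚ)).range

namespace polyFun

lemma mem_iff {f : ℚ → ℚ} : f ∈ polyFun ↔ ∃ p : Polynomial ℚ, ∀ t, p.eval t = f t := by
  simp only [polyFun, AlgHom.mem_range, funext_iff, Polynomial.aeval_fn_apply, id_eq,
    Polynomial.coe_aeval_eq_eval]

lemma comp_add_const {f : ℚ → ℚ} (hf : f ∈ polyFun) (c : ℚ) :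
    (fun t => f (t + c)) ∈ polyFun := by
  obtain ⟨p, hp⟩ := mem_iff.mp hf
  exact mem_iff.mpr ⟨p.comp (Polynomial.X + Polynomial.C c), fun t => by simp [hp]⟩

lemma const_mem (c : ℚ) : (fun _ => c) ∈ polyFun :=
  algebraMap_mem polyFun c

lemma id_mem : id ∈ polyFun :=
  mem_iff.mpr ⟨Polynomial.X, fun t => by simp⟩

lemma eq_of_eq_on_natCast {f g : ℚ → ℚ} (hf : f ∈ polyFun) (hg : g ∈ polyFun)
    (h : ∀ m : ℕ, f m = g m) : f = g := by
  obtain ⟨p, hp⟩ := mem_iff.mp hf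
  obtain ⟨q, hq⟩ := mem_iff.mp hg
  have hpq : p = q := Polynomial.eq_of_infinite_eval_eq p q <|
    Set.infinite_of_injective_forall_mem Nat.cast_injective fun m => by simp [hp, hq, h]
  funext t
  rw [← hp, ← hq, hpq]

lemma eq_zero_of_periodic {f : ℚ → ℚ} (hf : f ∈ polyFun) (hper : ∀ t, f t = f (t - 1))
    (h0 : f 0 = 0) : f = 0 := by
  refine eq_of_eq_on_natCast hf (zero_mem _) fun m => ?_
  induction m with
  | zero => simpa using h0
  | succ k ih => simpa [hper ((k : ℚ) + 1)] using ih

lemma coeff_mul_mem {F G : ℚ → ℚ⟦X⟧} (hF : ∀ k, (fun t => coeff k (F t)) ∈ polyFun)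
    (hG : ∀ k, (fun t => coeff k (G t)) ∈ polyFun) (n : ℕ) :
    (fun t => coeff n (F t * G t)) ∈ polyFun := by
  convert sum_mem fun p (_ : p ∈ antidiagonal n) => mul_mem (hF p.1) (hG p.2) using 1
  funext t
  simp only [coeff_mul, Finset.sum_apply, Pi.mul_apply]

end polyFun

lemma gchoose_mem (n : ℕ) : (fun x => gchoose x n) ∈ polyFun :=
  polyFun.mem_iff.mpr ⟨Polynomial.C (n.factorial : ℚ)⁻¹ * descPochhammer ℚ n, fun x => by
    simp [gchoose_eq_eval, div_eq_inv_mul]⟩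

lemma coeff_gSeries_zero (y a : ℚ) : coeff 0 (gSeries y a) = 1 := by
  simp [gSeries]

lemma coeff_gSeries_mem (a : ℚ) (n : ℕ) : (fun y => coeff n (gSeries y a)) ∈ polyFun := by
  cases n with
  | zero =>
    simp only [coeff_gSeries_zero]
    exact polyFun.const_mem 1
  | succ n =>
    have hshift := polyFun.comp_add_const (gchoose_mem n) (-(a * (n + 1)) - 1)
    convert mul_mem (mul_mem polyFun.id_mem hshift) (polyFun.const_mem (n + 1 : ℚ)⁻¹) using 1
    funext y
    simp only [Pi.mul_apply, id_eq, coeff_gSeries_succ]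
    ring_nf

lemma gSeries_zero_left (a : ℚ) : gSeries 0 a = 1 := by
  ext (_ | n)
  · simp [coeff_gSeries_zero]
  · simp [coeff_gSeries_succ, coeff_one]

lemma gSeries_eq_sub_one_add_X_mul (y a : ℚ) :
    gSeries y a = gSeries (y - 1) a + X * gSeries (y - 1 - a) a := by
  ext (_ | _ | n)
  · rw [map_add, coeff_zero_X_mul, coeff_gSeries_zero, coeff_gSeries_zero, add_zero]
  · simp [coeff_gSeries_succ, coeff_gSeries_zero, gchoose]
  · rw [map_add, coeff_succ_X_mul, coeff_gSeries_succ, coeff_gSeries_succ, coeff_gSeries_succ]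
    push_cast
    have hu : y - a * (n + 1 + 1) - 1 = (y - a * (n + 2) - 2) + 1 := by ring
    have hu' : y - 1 - a * (n + 1 + 1) - 1 = y - a * (n + 2) - 2 := by ring
    have hu'' : y - 1 - a - a * (n + 1) - 1 = y - a * (n + 2) - 2 := by ring
    rw [hu, hu', hu'', gchoose_add_one_succ, gchoose_succ]
    field_simp
    ring

lemma gSeries_add (x y a : ℚ) : gSeries (x + y) a = gSeries x a * gSeries y a := by
  set E : ℚ → ℚ⟦X⟧ := fun t => gSeries x a * gSeries t a - gSeries (x + t) a with hE
  have hrec : ∀ t, E t = E (t - 1) + X * E (t - 1 - a) := fun t => by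
    simp only [hE]
    rw [gSeries_eq_sub_one_add_X_mul t, gSeries_eq_sub_one_add_X_mul (x + t),
      show x + t - 1 = x + (t - 1) by ring, show x + (t - 1) - a = x + (t - 1 - a) by ring]
    ring
  have hpoly : ∀ n, (fun t => coeff n (E t)) ∈ polyFun := fun n => by
    simp only [hE, map_sub]
    refine sub_mem (polyFun.coeff_mul_mem (fun k => polyFun.const_mem _) (coeff_gSeries_mem a) n) ?_
    simpa only [add_comm] using polyFun.comp_add_const (coeff_gSeries_mem a n) x
  have hE0 : E 0 = 0 := by simp [hE, gSeries_zero_left]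
  suffices hcoeff : ∀ n t, coeff n (E t) = 0 from
    (sub_eq_zero.mp (PowerSeries.ext fun n => (hcoeff n y).trans (map_zero _).symm)).symm
  intro n
  induction n using Nat.strong_induction_on with
  | _ n ih =>
    have hX : ∀ t, coeff n (X * E t) = 0 := fun t => by
      cases n with
      | zero => exact coeff_zero_X_mul _
      | succ k => rw [coeff_succ_X_mul]; exact ih k (Nat.lt_succ_self k) _
    refine congrFun (polyFun.eq_zero_of_periodic (hpoly n) (fun t => ?_) (by simp [hE0]))
    rw [hrec t, map_add, hX, add_zero]

lemma gSeries_natCast (a : ℚ) (m : ℕ) : gSeries m a = gSeries 1 a ^ m := by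
  induction m with
  | zero => simpa using gSeries_zero_left a
  | succ m ih => rw [Nat.cast_succ, gSeries_add, ih, pow_succ]

lemma PowerSeries.coeff_pow_eq_zero_of_lt {R : Type*} [Semiring R] {w : R⟦X⟧}
    (hw : constantCoeff w = 0) {n k : ℕ} (h : n < k) : coeff n (w ^ k) = 0 :=
  coeff_of_lt_order n ((Nat.cast_lt.mpr h).trans_le (le_order_pow_of_constantCoeff_eq_zero k hw))

lemma coeff_binPow_eq_sum {w : ℚ⟦X⟧} (hw : constantCoeff w = 0) (y : ℚ) {n N : ℕ}
    (hN : n < N) : coeff n (binPow w y) = ∑ k ∈ range N, gchoose y k * coeff n (w ^ k) := by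
  rw [binPow, coeff_mk]
  refine sum_subset (range_subset_range.mpr hN) fun k _ hk => ?_
  rw [coeff_pow_eq_zero_of_lt hw (by simpa using hk), mul_zero]

lemma binPow_natCast {w : ℚ⟦X⟧} (hw : constantCoeff w = 0) (m : ℕ) :
    binPow w m = (1 + w) ^ m := by
  ext n
  have hterm : ∀ k, coeff n (w ^ k * 1 ^ (m - k) * (m.choose k : ℚ⟦X⟧)) =
      gchoose m k * coeff n (w ^ k) := fun k => by
    rw [one_pow, mul_one, ← map_natCast C, coeff_mul_C, gchoose_natCast, mul_comm]
  rw [coeff_binPow_eq_sum hw _ (show n < n + m + 1 by omega), add_comm 1 w, add_pow, map_sum]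
  simp only [hterm]
  refine (sum_subset (range_subset_range.mpr (by omega)) fun k _ hk => ?_).symm
  rw [gchoose_natCast, Nat.choose_eq_zero_of_lt (by simp at hk; omega), Nat.cast_zero, zero_mul]

lemma coeff_binPow_mem (w : ℚ⟦X⟧) (n : ℕ) : (fun y => coeff n (binPow w y)) ∈ polyFun := by
  convert sum_mem fun k (_ : k ∈ range (n + 1)) =>
    mul_mem (gchoose_mem k) (polyFun.const_mem (coeff n (w ^ k))) using 1
  funext y
  rw [Finset.sum_apply, binPow, coeff_mk]
  rfl

/-- `g_{y,a} = (g_{1,a})^y`, where the `y`-th power of `g_{1,a} = 1 + w`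
(`w` has zero constant term) is the binomial series `∑_k C(y,k) w^k`. -/
theorem stmt4 (y a : ℚ) :
    gSeries y a = binPow (gSeries 1 a - 1) y := by
  have hw : constantCoeff (gSeries 1 a - 1) = 0 := by
    rw [map_sub, ← coeff_zero_eq_constantCoeff_apply, coeff_gSeries_zero, map_one, sub_self]
  ext n
  have h := polyFun.eq_of_eq_on_natCast (coeff_gSeries_mem a n) (coeff_binPow_mem _ n) fun m => by
    rw [gSeries_natCast, binPow_natCast hw, add_sub_cancel]
  exact congrFun h y
end

section
/- Define χ_n(y) = ∑_p b_{2p}(n) y^p where b_{2p}(n) = ∑_{n₁+n₂+n₃+n₄=n} ∑_{r₄-r₁=p-n} p(n₁,r₁)p(n₂)p(n₃)p(n₄,r₄). Then ∑_{n≥0} χ_n(y) z^n = ∏_{k≥1} (1-y^{k-1}z^k)^{-1}(1-y^k z^k)^{-2}(1-y^{k+1}z^k)^{-1} as formal power series. -/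
/-!
Weighting each part `j` of a partition by `g j`, the generating function of partitions is
`∏_k (1 - g k z^k)⁻¹` (`Nat.Partition.hasProd_genFun`). For `g j = y^(j-1)`, `y^j`, `y^(j+1)` a
partition of `m` with `r` parts has weight `y^(m-r)`, `y^m`, `y^(m+r)`, so the product of these
series, with the middle one squared, has `z^n`-coefficient `χ_n(y)`: the exponent of `y` is
`(n₁ - r₁) + n₂ + n₃ + (n₄ + r₄) = n + r₄ - r₁`. Modulo `z^(N+1)` only the factors with
`k ≤ N` of the infinite product matter, which gives the truncated identity.
-/

open PowerSeries Polynomial Finset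

/-- `p(n,r)`: the number of partitions of `n` into exactly `r` parts. -/
noncomputable def partCount (n r : ℕ) : ℕ :=
  Nat.card {p : n.Partition // Multiset.card p.parts = r}

/-- `p(n)`: the number of partitions of `n`. -/
noncomputable def partNum (n : ℕ) : ℕ := Nat.card n.Partition

/-- `b_{2p}(n) = ∑_{n₁+n₂+n₃+n₄=n} ∑_{r₄-r₁=p-n} p(n₁,r₁)p(n₂)p(n₃)p(n₄,r₄)`. -/
noncomputable def bP1P1 (n p : ℕ) : ℕ :=
  ∑ t ∈ Finset.Nat.antidiagonalTuple 4 n,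
    ∑ r₁ ∈ Finset.range (t 0 + 1), ∑ r₄ ∈ Finset.range (t 3 + 1),
      if (r₄ : ℤ) - r₁ = (p : ℤ) - n then
        partCount (t 0) r₁ * partNum (t 1) * partNum (t 2) * partCount (t 3) r₄
      else 0

/-- `χ_n(y) = ∑_p b_{2p}(n) y^p` (only `p ≤ 2n` contribute). -/
noncomputable def chiP1P1 (n : ℕ) : Polynomial ℚ :=
  ∑ p ∈ Finset.range (2 * n + 1), (bP1P1 n p : ℚ) • (Polynomial.X : Polynomial ℚ) ^ p

theorem Multiset.prod_map_pow_eq_pow_sum {ι M : Type*} [CommMonoid M] (s : Multiset ι)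
    (f : ι → ℕ) (a : M) : (s.map fun i ↦ a ^ f i).prod = a ^ (s.map f).sum := by
  induction s using Multiset.induction_on with
  | empty => simp
  | cons i s ih => simp [ih, pow_add]

namespace PowerSeries

variable {R : Type*}

theorem coeff_prod_fin [CommSemiring R] {k : ℕ} (A : Fin k → R⟦X⟧) (n : ℕ) :
    coeff n (∏ i, A i) = ∑ t ∈ Finset.Nat.antidiagonalTuple k n, ∏ i, coeff (t i) (A i) := by
  classical
  rw [coeff_prod, finsuppAntidiag, sum_map, ← piAntidiag_univ_fin_eq_antidiagonalTuple]
  exact sum_attach (piAntidiag univ n) fun t ↦ ∏ i, coeff (t i) (A i)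

theorem coeff_mul_mul_mul [CommSemiring R] (A B C D : R⟦X⟧) (n : ℕ) :
    coeff n (A * B * C * D) = ∑ t ∈ Finset.Nat.antidiagonalTuple 4 n,
      coeff (t 0) A * coeff (t 1) B * coeff (t 2) C * coeff (t 3) D := by
  simpa [Fin.prod_univ_four] using coeff_prod_fin ![A, B, C, D] n

theorem mk_span_X_pow_eq_mk_iff [CommRing R] {φ ψ : R⟦X⟧} {n : ℕ} :
    Ideal.Quotient.mk (Ideal.span {X ^ n}) φ = Ideal.Quotient.mk (Ideal.span {X ^ n}) ψ ↔
      ∀ m < n, coeff m φ = coeff m ψ := by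
  simp [Ideal.Quotient.eq, Ideal.mem_span_singleton, X_pow_dvd_iff, sub_eq_zero]

end PowerSeries

namespace Nat.Partition

open PowerSeries

variable {R : Type*} {n : ℕ}

theorem card_parts_le (p : n.Partition) : Multiset.card p.parts ≤ n := by
  simpa [p.parts_sum] using Multiset.card_nsmul_le_sum (a := 1) fun _ hi ↦ p.parts_pos hi

theorem sum_parts_map_add_one (p : n.Partition) :
    (p.parts.map (· + 1)).sum = n + Multiset.card p.parts := by
  simp [Multiset.sum_map_add, p.parts_sum]

theorem sum_parts_map_sub_one (p : n.Partition) :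
    (p.parts.map (· - 1)).sum = n - Multiset.card p.parts := by
  have h : (p.parts.map fun i ↦ i - 1 + 1).sum = n := by
    rw [Multiset.map_congr rfl fun i hi ↦ Nat.sub_add_cancel (p.parts_pos hi), Multiset.map_id',
      p.parts_sum]
  rw [Multiset.sum_map_add] at h
  simp only [Multiset.map_const', Multiset.sum_replicate, smul_eq_mul, mul_one] at h
  omega

theorem sum_univ_card_parts {M : Type*} [AddCommMonoid M] (h : ℕ → M) :
    ∑ p : n.Partition, h (Multiset.card p.parts) =
      ∑ r ∈ range (n + 1), partCount n r • h r := by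
  rw [← sum_fiberwise_of_maps_to (g := fun p : n.Partition ↦ Multiset.card p.parts)
    (t := range (n + 1)) fun p _ ↦ mem_range.mpr (Nat.lt_succ_of_le p.card_parts_le)]
  refine sum_congr rfl fun r _ ↦ ?_
  rw [sum_congr rfl fun p hp ↦ by rw [(mem_filter.mp hp).2], sum_const, partCount,
    Nat.card_eq_fintype_card, Fintype.card_subtype]

theorem coeff_genFun_pow [CommSemiring R] (g : ℕ → R) (n : ℕ) :
    coeff n (genFun fun i c ↦ g i ^ c) = ∑ p : n.Partition, (p.parts.map g).prod := by
  simp [Finsupp.prod, prod_multiset_map_count]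

end Nat.Partition

namespace PowerSeries

open WithPiTopology

variable {R : Type*} [CommRing R]

theorem _root_.Nat.Partition.hasProd_genFun_pow [TopologicalSpace R] [IsTopologicalRing R]
    [T2Space R] (g : ℕ → R) :
    HasProd (fun i ↦ ∑' j, (C (g (i + 1)) * X ^ (i + 1)) ^ j)
      (Nat.Partition.genFun fun i c ↦ g i ^ c) := by
  have hgeom (i : ℕ) : ∑' j, (C (g (i + 1)) * X ^ (i + 1)) ^ j =
      1 + ∑' j, g (i + 1) ^ (j + 1) • (X : R⟦X⟧) ^ ((i + 1) * (j + 1)) := by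
    have hs := summable_pow_of_constantCoeff_eq_zero
      (f := C (g (i + 1)) * (X : R⟦X⟧) ^ (i + 1)) (by simp)
    rw [hs.tsum_eq_zero_add]
    simp [mul_pow, ← map_pow, ← pow_mul, smul_eq_C_mul]
  rw [funext hgeom]
  exact Nat.Partition.hasProd_genFun (fun i c ↦ g i ^ c)

theorem _root_.Nat.Partition.genFun_pow_mul_prod_one_sub_eq_one_mod (g : ℕ → R) (N : ℕ) :
    Ideal.Quotient.mk (Ideal.span {X ^ (N + 1)})
      (Nat.Partition.genFun (fun i c ↦ g i ^ c) * ∏ k ∈ Icc 1 N, (1 - C (g k) * X ^ k)) = 1 := by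
  -- the discrete topology on `R` makes `hasProd_genFun` available, and in the product topology
  -- on `R⟦X⟧` the residue class of `1` modulo `X ^ (N + 1)` is closed
  let _ : TopologicalSpace R := ⊥
  have _ : DiscreteTopology R := ⟨rfl⟩
  set I := Ideal.span {(X : R⟦X⟧) ^ (N + 1)}
  set a : ℕ → R⟦X⟧ := fun i ↦ C (g (i + 1)) * X ^ (i + 1)
  have hgeom (i : ℕ) : (∑' j, a i ^ j) * (1 - a i) = 1 :=
    tsum_pow_mul_one_sub_of_constantCoeff_eq_zero (by simp [a])
  have hP : HasProd (fun i ↦ if i < N then 1 - a i else 1)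
      (∏ k ∈ Icc 1 N, (1 - C (g k) * X ^ k)) := by
    have hfin : ∏ k ∈ Icc 1 N, (1 - C (g k) * X ^ k) =
        ∏ i ∈ range N, if i < N then 1 - a i else 1 := by
      rw [← Ico_add_one_right_eq_Icc, prod_Ico_eq_prod_range, add_tsub_cancel_right]
      exact prod_congr rfl fun i hi ↦ by rw [if_pos (mem_range.mp hi), add_comm 1 i]
    rw [hfin]
    exact hasProd_prod_of_ne_finset_one fun i hi ↦ if_neg (by simpa using hi)
  have hterm (i : ℕ) :
      Ideal.Quotient.mk I ((∑' j, a i ^ j) * if i < N then 1 - a i else 1) = 1 := by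
    split_ifs with hi
    · rw [hgeom, map_one]
    · rw [mul_one, ← map_one (Ideal.Quotient.mk I), Ideal.Quotient.eq, Ideal.mem_span_singleton]
      have hsub : (∑' j, a i ^ j) - 1 = a i * ∑' j, a i ^ j := by
        linear_combination hgeom i
      rw [hsub]
      exact Dvd.dvd.mul_right (Dvd.dvd.mul_left (pow_dvd_pow X (by omega)) _) _
  have hclosed : IsClosed {f : R⟦X⟧ | Ideal.Quotient.mk I f = 1} := by
    simp_rw [← map_one (Ideal.Quotient.mk I), I, mk_span_X_pow_eq_mk_iff, Set.ofPred_forall]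
    exact isClosed_iInter fun m ↦ isClosed_iInter fun _ ↦
      isClosed_eq (continuous_coeff R m) continuous_const
  refine hclosed.mem_of_tendsto ((Nat.Partition.hasProd_genFun_pow g).mul hP)
    (Filter.Eventually.of_forall fun s ↦ ?_)
  rw [Set.mem_ofPred_eq, map_prod]
  exact prod_eq_one fun i _ ↦ hterm i

end PowerSeries

namespace Nat.Partition

open PowerSeries

variable {R : Type*} [CommSemiring R]

theorem coeff_genFun_pow_sub_one (x : R) (m : ℕ) :
    coeff m (genFun fun i c ↦ (x ^ (i - 1)) ^ c) =
      ∑ r ∈ range (m + 1), partCount m r • x ^ (m - r) := by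
  simp_rw [coeff_genFun_pow, Multiset.prod_map_pow_eq_pow_sum, sum_parts_map_sub_one]
  exact sum_univ_card_parts fun r ↦ x ^ (m - r)

theorem coeff_genFun_pow_self (x : R) (m : ℕ) :
    coeff m (genFun fun i c ↦ (x ^ i) ^ c) = partNum m • x ^ m := by
  rw [coeff_genFun_pow, sum_congr rfl fun p _ ↦ (p.parts.prod_map_pow_eq_pow_sum id x).trans
    (by rw [Multiset.map_id, p.parts_sum]), sum_const, Finset.card_univ, partNum,
    Nat.card_eq_fintype_card]

theorem coeff_genFun_pow_add_one (x : R) (m : ℕ) :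
    coeff m (genFun fun i c ↦ (x ^ (i + 1)) ^ c) =
      ∑ r ∈ range (m + 1), partCount m r • x ^ (m + r) := by
  simp_rw [coeff_genFun_pow, Multiset.prod_map_pow_eq_pow_sum, sum_parts_map_add_one]
  exact sum_univ_card_parts fun r ↦ x ^ (m + r)

end Nat.Partition

theorem chiP1P1_eq_sum (n : ℕ) :
    chiP1P1 n = ∑ t ∈ Finset.Nat.antidiagonalTuple 4 n,
      ∑ r₁ ∈ range (t 0 + 1), ∑ r₄ ∈ range (t 3 + 1),
        (partCount (t 0) r₁ * partNum (t 1) * partNum (t 2) * partCount (t 3) r₄) •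
          (Polynomial.X : ℚ[X]) ^ (n + r₄ - r₁) := by
  simp only [chiP1P1, bP1P1, Nat.cast_sum, sum_smul, Nat.cast_ite, Nat.cast_zero, ite_smul,
    zero_smul, Nat.cast_smul_eq_nsmul]
  rw [sum_comm]
  refine sum_congr rfl fun t ht ↦ ?_
  have hn : t 0 + t 1 + t 2 + t 3 = n := by
    simpa [Fin.sum_univ_four] using Finset.Nat.mem_antidiagonalTuple.mp ht
  rw [sum_comm]
  refine sum_congr rfl fun r₁ hr₁ ↦ ?_
  rw [sum_comm]
  refine sum_congr rfl fun r₄ hr₄ ↦ ?_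
  rw [mem_range] at hr₁ hr₄
  rw [sum_eq_single (n + r₄ - r₁)]
  · rw [if_pos (by omega)]
  · intro p _ hp
    rw [if_neg (by omega)]
  · intro h
    exact absurd (mem_range.mpr (by omega)) h

theorem mk_chiP1P1 :
    PowerSeries.mk chiP1P1 =
      Nat.Partition.genFun (fun i c ↦ ((Polynomial.X : ℚ[X]) ^ (i - 1)) ^ c) *
        Nat.Partition.genFun (fun i c ↦ ((Polynomial.X : ℚ[X]) ^ i) ^ c) *
        Nat.Partition.genFun (fun i c ↦ ((Polynomial.X : ℚ[X]) ^ i) ^ c) *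
        Nat.Partition.genFun (fun i c ↦ ((Polynomial.X : ℚ[X]) ^ (i + 1)) ^ c) := by
  ext1 n
  rw [PowerSeries.coeff_mk, chiP1P1_eq_sum, PowerSeries.coeff_mul_mul_mul]
  refine sum_congr rfl fun t ht ↦ ?_
  have hn : t 0 + t 1 + t 2 + t 3 = n := by
    simpa [Fin.sum_univ_four] using Finset.Nat.mem_antidiagonalTuple.mp ht
  simp only [Nat.Partition.coeff_genFun_pow_sub_one,
    Nat.Partition.coeff_genFun_pow_self, Nat.Partition.coeff_genFun_pow_add_one]
  rw [sum_mul, sum_mul, sum_mul]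
  refine sum_congr rfl fun r₁ hr₁ ↦ ?_
  rw [mul_sum]
  refine sum_congr rfl fun r₄ hr₄ ↦ ?_
  rw [mem_range] at hr₁ hr₄
  rw [show n + r₄ - r₁ = (t 0 - r₁) + t 1 + t 2 + (t 3 + r₄) by omega]
  simp only [pow_add, nsmul_eq_mul, Nat.cast_mul]
  ring

/-- `∑_{n≥0} χ_n(y) z^n = ∏_{k≥1} (1-y^{k-1}z^k)⁻¹(1-y^kz^k)⁻²(1-y^{k+1}z^k)⁻¹`,
formulated coefficient-wise: for every `N` and `n ≤ N`, multiplying the left-hand side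
by `∏_{k=1}^{N} (1-y^{k-1}z^k)(1-y^kz^k)²(1-y^{k+1}z^k)` gives `z^n`-coefficient `δ_{n,0}`. -/
theorem stmt10 (N : ℕ) : ∀ n ≤ N,
    (PowerSeries.coeff (R := Polynomial ℚ) n)
      ((PowerSeries.mk fun m => chiP1P1 m) *
        ∏ k ∈ Finset.Icc 1 N,
          ((1 - PowerSeries.C (R := Polynomial ℚ) (Polynomial.X ^ (k - 1)) * PowerSeries.X ^ k) *
            (1 - PowerSeries.C (R := Polynomial ℚ) (Polynomial.X ^ k) * PowerSeries.X ^ k) ^ 2 *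
            (1 - PowerSeries.C (R := Polynomial ℚ) (Polynomial.X ^ (k + 1)) * PowerSeries.X ^ k))) =
    if n = 0 then 1 else 0 := by
  intro n hn
  have h₁ := Nat.Partition.genFun_pow_mul_prod_one_sub_eq_one_mod
    (fun k ↦ (Polynomial.X : ℚ[X]) ^ (k - 1)) N
  have h₂ := Nat.Partition.genFun_pow_mul_prod_one_sub_eq_one_mod
    (fun k ↦ (Polynomial.X : ℚ[X]) ^ k) N
  have h₃ := Nat.Partition.genFun_pow_mul_prod_one_sub_eq_one_mod
    (fun k ↦ (Polynomial.X : ℚ[X]) ^ (k + 1)) N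
  rw [← PowerSeries.coeff_one, mk_chiP1P1]
  simp only [sq, prod_mul_distrib]
  rw [show ∀ a b c d p q r s : (ℚ[X])⟦X⟧,
      a * b * c * d * (p * (q * r) * s) = a * p * (b * q) * (c * r) * (d * s) from
    fun _ _ _ _ _ _ _ _ ↦ by ring]
  refine PowerSeries.mk_span_X_pow_eq_mk_iff (n := N + 1).mp ?_ n (by omega)
  simp only [map_mul, h₁, h₂, h₃, map_one, mul_one]
end

section
/- For a vector space V over a field k of characteristic 0 with the symmetric group 𝔖_n acting on V^{⊗n} by permutations, the dimension of the space of invariants is C(dim V + n - 1, n) and the dimension of the space of anti-invariants {v : π·v = ε(π)v for all π} is C(dim V, n). -/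
/-!
A basis `(eᵢ)` of `V` gives the basis `e_f = e_{f 0} ⊗ ⋯ ⊗ e_{f (n-1)}` of `V^{⊗n}`, indexed by
tuples `f : Fin n → ι`, and `σ` permutes it: `σ · e_f = e_{f ∘ σ⁻¹}`. So a tensor transforms by a
character `χ` iff its coordinate function `c` satisfies `c (f ∘ σ) = χ σ * c f`.
For `χ = 1` these are the functions of the multiset of values of `f`, counted by `Sym ι n`.
For `χ = sign`, a transposition fixing a tuple with a repeated value forces `c f = -c f = 0`,
and on injective tuples `c` is determined by its values on the increasing enumerations of the
`n`-subsets of `ι`, which can be prescribed freely.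
-/


open PiTensorProduct
open scoped TensorProduct

/-- The submodule of `𝔖_n`-invariants of `V^{⊗n}`, where `𝔖_n` permutes tensor factors. -/
noncomputable def tensorInvariants (k V : Type*) [Field k] [AddCommGroup V] [Module k V]
    (n : ℕ) : Submodule k (⨂[k] (i : Fin n), V) :=
  ⨅ σ : Equiv.Perm (Fin n),
    LinearMap.eqLocus
      (PiTensorProduct.reindex k (fun _ : Fin n => V) σ).toLinearMap LinearMap.id

/-- The submodule of `𝔖_n`-anti-invariants `{v : π·v = ε(π)·v for all π}` of `V^{⊗n}`. -/
noncomputable def tensorAntiInvariants (k V : Type*) [Field k] [AddCommGroup V] [Module k V]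
    (n : ℕ) : Submodule k (⨂[k] (i : Fin n), V) :=
  ⨅ σ : Equiv.Perm (Fin n),
    LinearMap.eqLocus
      (PiTensorProduct.reindex k (fun _ : Fin n => V) σ).toLinearMap
      ((((Equiv.Perm.sign σ : ℤ) : k)) • LinearMap.id)

open Module

theorem Module.Basis.piTensorProduct_repr_reindex {R M ι : Type*} [CommSemiring R]
    [AddCommMonoid M] [Module R M] {n : ℕ} (b : Basis ι R M) (σ : Equiv.Perm (Fin n))
    (x : ⨂[R] _ : Fin n, M) (f : Fin n → ι) :
    (Basis.piTensorProduct fun _ => b).repr (PiTensorProduct.reindex R (fun _ => M) σ x) f =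
      (Basis.piTensorProduct fun _ => b).repr x (f ∘ σ) := by
  induction x using PiTensorProduct.induction_on with
  | smul_tprod r v =>
    simp only [map_smul, reindex_tprod, Finsupp.smul_apply,
      Basis.piTensorProduct_repr_tprod_apply]
    congr 1
    exact (Fintype.prod_equiv σ _ _ fun i => by simp).symm
  | add x y hx hy => simp only [map_add, Finsupp.add_apply, hx, hy]

section Isotypic

variable (k : Type*) [CommRing k]

def equivariantFunctions (ι : Type*) (n : ℕ) (χ : Equiv.Perm (Fin n) → k) :
    Submodule k ((Fin n → ι) → k) :=
  ⨅ σ : Equiv.Perm (Fin n),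
    LinearMap.eqLocus (LinearMap.funLeft k k (· ∘ ⇑σ)) (χ σ • LinearMap.id)

def isotypicTensors (V : Type*) [AddCommGroup V] [Module k V] (n : ℕ)
    (χ : Equiv.Perm (Fin n) → k) : Submodule k (⨂[k] _ : Fin n, V) :=
  ⨅ σ : Equiv.Perm (Fin n),
    LinearMap.eqLocus (PiTensorProduct.reindex k (fun _ => V) σ).toLinearMap
      (χ σ • LinearMap.id)

variable {k} {n : ℕ}

theorem mem_equivariantFunctions {ι : Type*} {χ : Equiv.Perm (Fin n) → k}
    {c : (Fin n → ι) → k} :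
    c ∈ equivariantFunctions k ι n χ ↔ ∀ (σ : Equiv.Perm (Fin n)) f, c (f ∘ σ) = χ σ * c f := by
  simp [equivariantFunctions, funext_iff]

variable {V ι : Type*} [AddCommGroup V] [Module k V] [Finite ι]

theorem isotypicTensors_eq_comap (b : Basis ι k V) (χ : Equiv.Perm (Fin n) → k) :
    isotypicTensors k V n χ = (equivariantFunctions k ι n χ).comap
      (Basis.piTensorProduct fun _ => b).equivFun.toLinearMap := by
  ext x
  simp only [isotypicTensors, Submodule.mem_iInf, LinearMap.mem_eqLocus, Submodule.mem_comap,
    mem_equivariantFunctions, LinearEquiv.coe_coe, Basis.equivFun_apply]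
  refine forall_congr' fun σ => ?_
  rw [← (Basis.piTensorProduct fun _ => b).repr.injective.eq_iff, DFunLike.ext_iff]
  simp [Basis.piTensorProduct_repr_reindex]

theorem finrank_isotypicTensors (b : Basis ι k V) (χ : Equiv.Perm (Fin n) → k) :
    finrank k (isotypicTensors k V n χ) = finrank k (equivariantFunctions k ι n χ) := by
  rw [isotypicTensors_eq_comap b, Submodule.comap_equiv_eq_map_symm, LinearEquiv.finrank_map_eq]

end Isotypic

theorem tensorInvariants_eq_isotypicTensors (k V : Type*) [Field k] [AddCommGroup V]
    [Module k V] (n : ℕ) : tensorInvariants k V n = isotypicTensors k V n 1 := by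
  simp [tensorInvariants, isotypicTensors]

theorem tensorAntiInvariants_eq_isotypicTensors (k V : Type*) [Field k] [AddCommGroup V]
    [Module k V] (n : ℕ) :
    tensorAntiInvariants k V n = isotypicTensors k V n fun σ => (Equiv.Perm.sign σ : ℤ) :=
  rfl

namespace Sym

variable {α : Type*} {n : ℕ}

def ofFn (f : Fin n → α) : Sym α n :=
  ⟨List.ofFn f, by simp⟩

theorem ofFn_comp_perm (f : Fin n → α) (σ : Equiv.Perm (Fin n)) : ofFn (f ∘ σ) = ofFn f :=
  Subtype.ext (Multiset.coe_eq_coe.mpr (σ.ofFn_comp_perm f))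

theorem ofFn_surjective : Function.Surjective (ofFn (α := α) (n := n)) := by
  rintro ⟨m, hm⟩
  obtain ⟨l, rfl⟩ := Quot.exists_rep m
  subst hm
  exact ⟨l.get, Subtype.ext (by simp [ofFn, List.ofFn_get])⟩

theorem exists_perm_of_ofFn_eq [LinearOrder α] {f g : Fin n → α} (h : ofFn f = ofFn g) :
    ∃ σ : Equiv.Perm (Fin n), g = f ∘ σ := by
  have hsorted : f ∘ Tuple.sort f = g ∘ Tuple.sort g := by
    refine List.ofFn_injective (List.Perm.eq_of_sortedLE (Tuple.monotone_sort f).sortedLE_ofFn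
      (Tuple.monotone_sort g).sortedLE_ofFn ?_)
    exact ((Tuple.sort f).ofFn_comp_perm f).trans <| (Multiset.coe_eq_coe.mp
      (congrArg Subtype.val h)).trans ((Tuple.sort g).ofFn_comp_perm g).symm
  refine ⟨(Tuple.sort g).symm.trans (Tuple.sort f), funext fun x => ?_⟩
  simpa using (congrFun hsorted ((Tuple.sort g).symm x)).symm

end Sym

theorem range_funLeft_symOfFn (k ι : Type*) [CommRing k] [LinearOrder ι] (n : ℕ) :
    LinearMap.range (LinearMap.funLeft k k (Sym.ofFn (α := ι) (n := n))) =
      equivariantFunctions k ι n 1 := by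
  ext c
  simp only [LinearMap.mem_range, mem_equivariantFunctions, Pi.one_apply, one_mul]
  constructor
  · rintro ⟨a, rfl⟩ σ f
    simp [LinearMap.funLeft, Sym.ofFn_comp_perm]
  · intro hc
    refine ⟨c ∘ Function.surjInv Sym.ofFn_surjective, funext fun f => ?_⟩
    obtain ⟨σ, hσ⟩ := Sym.exists_perm_of_ofFn_eq
      (Function.surjInv_eq Sym.ofFn_surjective (Sym.ofFn f)).symm
    simp only [LinearMap.funLeft_apply, Function.comp_apply]
    rw [hσ, hc]

theorem finrank_equivariantFunctions_one (k ι : Type*) [CommRing k] [Nontrivial k] [Fintype ι]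
    [LinearOrder ι] (n : ℕ) :
    finrank k (equivariantFunctions k ι n 1) = (Fintype.card ι + n - 1).choose n := by
  rw [← range_funLeft_symOfFn, LinearMap.finrank_range_of_inj
    (LinearMap.funLeft_injective_of_surjective k k _ Sym.ofFn_surjective),
    Module.finrank_fintype_fun_eq_card, Sym.card_sym_eq_choose]

theorem apply_eq_zero_of_not_injective {k ι : Type*} [CommRing k] [NoZeroDivisors k]
    [NeZero (2 : k)] {n : ℕ} {c : (Fin n → ι) → k}
    (hc : c ∈ equivariantFunctions k ι n fun σ => (Equiv.Perm.sign σ : ℤ))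
    {f : Fin n → ι} (hf : ¬ Function.Injective f) : c f = 0 := by
  obtain ⟨i, j, hij, hne⟩ := Function.not_injective_iff.mp hf
  have hswap : f ∘ Equiv.swap i j = f := by
    rw [Equiv.comp_swap_eq_update, hij, Function.update_eq_self, ← hij, Function.update_eq_self]
  have h := mem_equivariantFunctions.mp hc (Equiv.swap i j) f
  rw [hswap, Equiv.Perm.sign_swap hne] at h
  have h2 : (2 : k) * c f = 0 := by push_cast at h; linear_combination h
  exact (mul_eq_zero.mp h2).resolve_left two_ne_zero

section Alternating

variable {k ι : Type*} [CommRing k] [LinearOrder ι] {n : ℕ}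

def imageSubset (f : Fin n → ι) (hf : Function.Injective f) : {s : Finset ι // s.card = n} :=
  ⟨Finset.univ.image f, by rw [Finset.card_image_of_injective _ hf, Finset.card_fin]⟩

theorem imageSubset_comp_perm {f : Fin n → ι} (hf : Function.Injective f)
    (σ : Equiv.Perm (Fin n)) : imageSubset (f ∘ σ) (hf.comp σ.injective) = imageSubset f hf :=
  Subtype.ext <| by
    change Finset.univ.image (f ∘ σ) = Finset.univ.image f
    rw [← Finset.image_image, Finset.image_univ_equiv]

theorem orderEmbOfFin_imageSubset {f : Fin n → ι} (hf : Function.Injective f) :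
    ⇑((imageSubset f hf).1.orderEmbOfFin (imageSubset f hf).2) = f ∘ Tuple.sort f := by
  refine (Finset.orderEmbOfFin_unique (imageSubset f hf).2 (f := f ∘ Tuple.sort f)
    (fun i => Finset.mem_image_of_mem _ (Finset.mem_univ _)) ?_).symm
  exact (Tuple.monotone_sort f).strictMono_of_injective (hf.comp (Tuple.sort f).injective)

theorem imageSubset_orderEmbOfFin (s : {s : Finset ι // s.card = n}) :
    imageSubset _ (s.1.orderEmbOfFin s.2).injective = s :=
  Subtype.ext <| by
    rw [imageSubset, ← Finset.coe_inj, Finset.coe_image, Finset.coe_univ, Set.image_univ,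
      Finset.range_orderEmbOfFin]

theorem sign_sort_comp_perm {f : Fin n → ι} (hf : Function.Injective f)
    (σ : Equiv.Perm (Fin n)) :
    Equiv.Perm.sign (Tuple.sort (f ∘ σ)) =
      Equiv.Perm.sign σ * Equiv.Perm.sign (Tuple.sort f) := by
  have h : σ * Tuple.sort (f ∘ σ) = Tuple.sort f :=
    Equiv.ext fun i => hf (congrFun (Tuple.comp_perm_comp_sort_eq_comp_sort (f := f) (σ := σ)) i)
  rw [← h, Equiv.Perm.sign_mul, ← mul_assoc, Int.units_mul_self, one_mul]

variable (k) in
open Classical in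
noncomputable def alternatingExtension :
    ({s : Finset ι // s.card = n} → k) →ₗ[k] ((Fin n → ι) → k) :=
  LinearMap.pi fun f => if hf : Function.Injective f then
    ((Equiv.Perm.sign (Tuple.sort f) : ℤ) : k) • LinearMap.proj (imageSubset f hf) else 0

theorem alternatingExtension_apply_of_injective (a : {s : Finset ι // s.card = n} → k)
    {f : Fin n → ι} (hf : Function.Injective f) :
    alternatingExtension k a f = (Equiv.Perm.sign (Tuple.sort f) : ℤ) * a (imageSubset f hf) := by
  simp [alternatingExtension, hf]

theorem alternatingExtension_apply_of_not_injective (a : {s : Finset ι // s.card = n} → k)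
    {f : Fin n → ι} (hf : ¬ Function.Injective f) : alternatingExtension k a f = 0 := by
  simp [alternatingExtension, hf]

theorem alternatingExtension_apply_orderEmbOfFin (a : {s : Finset ι // s.card = n} → k)
    (s : {s : Finset ι // s.card = n}) :
    alternatingExtension k a (s.1.orderEmbOfFin s.2) = a s := by
  rw [alternatingExtension_apply_of_injective a (s.1.orderEmbOfFin s.2).injective,
    imageSubset_orderEmbOfFin,
    Tuple.sort_eq_refl_iff_monotone.mpr (s.1.orderEmbOfFin s.2).monotone]
  simp

theorem alternatingExtension_injective :
    Function.Injective (alternatingExtension k (ι := ι) (n := n)) := fun a b h =>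
  funext fun s => by
    rw [← alternatingExtension_apply_orderEmbOfFin a, ← alternatingExtension_apply_orderEmbOfFin b,
      h]

theorem range_alternatingExtension [NoZeroDivisors k] [NeZero (2 : k)] :
    LinearMap.range (alternatingExtension k (ι := ι) (n := n)) =
      equivariantFunctions k ι n fun σ => (Equiv.Perm.sign σ : ℤ) := by
  ext c
  rw [LinearMap.mem_range]
  constructor
  · rintro ⟨a, rfl⟩
    refine mem_equivariantFunctions.mpr fun σ f => ?_
    by_cases hf : Function.Injective f
    · rw [alternatingExtension_apply_of_injective a (hf.comp σ.injective),
        alternatingExtension_apply_of_injective a hf, imageSubset_comp_perm hf,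
        sign_sort_comp_perm hf]
      push_cast
      ring
    · have hfσ : ¬ Function.Injective (f ∘ σ) := fun h =>
        hf (by simpa using h.comp σ.symm.injective)
      rw [alternatingExtension_apply_of_not_injective a hf,
        alternatingExtension_apply_of_not_injective a hfσ, mul_zero]
  · intro hc
    refine ⟨fun s => c (s.1.orderEmbOfFin s.2), funext fun f => ?_⟩
    by_cases hf : Function.Injective f
    · rw [alternatingExtension_apply_of_injective _ hf, orderEmbOfFin_imageSubset hf,
        mem_equivariantFunctions.mp hc, ← mul_assoc, ← Int.cast_mul, ← Units.val_mul,
        Int.units_mul_self]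
      simp
    · rw [alternatingExtension_apply_of_not_injective _ hf, apply_eq_zero_of_not_injective hc hf]

end Alternating

theorem finrank_equivariantFunctions_sign (k ι : Type*) [CommRing k] [IsDomain k]
    [NeZero (2 : k)] [Fintype ι] [LinearOrder ι] (n : ℕ) :
    finrank k (equivariantFunctions k ι n fun σ => (Equiv.Perm.sign σ : ℤ)) =
      (Fintype.card ι).choose n := by
  rw [← range_alternatingExtension, LinearMap.finrank_range_of_inj alternatingExtension_injective,
    Module.finrank_fintype_fun_eq_card, Fintype.card_finset_len]

/-- For a finite-dimensional vector space `V` over a field of characteristic zero and the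
permutation action of `𝔖_n` on `V^{⊗n}`, the space of invariants has dimension
`C(dim V + n - 1, n)` and the space of anti-invariants has dimension `C(dim V, n)`. -/
theorem stmt13 (k V : Type*) [Field k] [CharZero k] [AddCommGroup V] [Module k V]
    [FiniteDimensional k V] (n : ℕ) :
    Module.finrank k (tensorInvariants k V n) =
        (Module.finrank k V + n - 1).choose n ∧
      Module.finrank k (tensorAntiInvariants k V n) =
        (Module.finrank k V).choose n := by
  have b := Module.finBasis k V
  rw [tensorInvariants_eq_isotypicTensors, tensorAntiInvariants_eq_isotypicTensors,
    finrank_isotypicTensors b, finrank_isotypicTensors b, finrank_equivariantFunctions_one,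
    finrank_equivariantFunctions_sign, Fintype.card_fin]
  exact ⟨rfl, rfl⟩
end

section
/- For nonnegative integers k, n, a: the number of ways to choose n points from k equally spaced points on a line such that any two chosen points have distance greater than a is C(k - a(n-1), n), and the number of such choices from k equally spaced points on a circle is (k/(k-an))·C(k-an, n) (when k > an). -/
/-!
On the line, split the admissible choices of `n + 1` points in `{0, …, m}` by whether `m` is
chosen; if it is, the other `n` points lie in `{0, …, m - a - 1}`. This is the recurrence
`L(m+1, n+1) = L(m, n+1) + L(m-a, n)`, which is Pascal's rule for `C(m - a(n-1), n)`.

On the circle, rotations preserve admissibility, so every point of `ℤ/kℤ` lies in the same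
number of admissible choices as `0`. Deleting `0` together with its `a` neighbours on each side
turns the choices containing `0` into line choices of `n - 1` points among `k - 2a - 1`, counted
by `C(k - an - 1, n - 1)`. Double counting the pairs (point, choice containing it) gives
`n · #circle = k · C(k - an - 1, n - 1) = n · k / (k - an) · C(k - an, n)`.
-/

open Finset

/-- Circular distance between residues `i, j` modulo `k` (for `k > 0`). -/
def circDist (k : ℕ) [NeZero k] (i j : ZMod k) : ℕ :=
  min (Nat.dist i.val j.val) (k - Nat.dist i.val j.val)

def lineChoices (a m n : ℕ) : Finset (Finset ℕ) :=
  {s ∈ powersetCard n (range m) | (s : Set ℕ).Pairwise fun i j => a < Nat.dist i j}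

lemma pairwise_insert_of_subset_range {a m : ℕ} {t : Finset ℕ} (ht : t ⊆ range m) :
    ((insert m t : Finset ℕ) : Set ℕ).Pairwise (fun i j => a < Nat.dist i j) ↔
      t ⊆ range (m - a) ∧ (t : Set ℕ).Pairwise fun i j => a < Nat.dist i j := by
  have dist_top {x} (hx : x ∈ t) : Nat.dist x m = m - x :=
    Nat.dist_eq_sub_of_le (mem_range.1 (ht hx)).le
  rw [coe_insert, Set.pairwise_insert, and_comm]
  refine and_congr_left' ⟨fun h x hx => ?_, fun h x hx _ => ?_⟩
  · have := (h x hx (mem_range.1 (ht hx)).ne').2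
    rw [dist_top hx] at this
    exact mem_range.2 (by omega)
  · have := mem_range.1 (h hx)
    rw [Nat.dist_comm m, dist_top hx, and_self]
    omega

lemma filter_pairwise_insert_eq_lineChoices (a m n : ℕ) :
    {t ∈ powersetCard n (range m) |
      ((insert m t : Finset ℕ) : Set ℕ).Pairwise fun i j => a < Nat.dist i j} =
      lineChoices a (m - a) n := by
  ext t
  simp only [lineChoices, mem_filter, mem_powersetCard]
  constructor
  · rintro ⟨⟨ht, hcard⟩, hsep⟩
    obtain ⟨ht', hsep'⟩ := (pairwise_insert_of_subset_range ht).1 hsep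
    exact ⟨⟨ht', hcard⟩, hsep'⟩
  · rintro ⟨⟨ht, hcard⟩, hsep⟩
    have ht' := ht.trans (range_subset_range.2 (Nat.sub_le m a))
    exact ⟨⟨ht', hcard⟩, (pairwise_insert_of_subset_range ht').2 ⟨ht, hsep⟩⟩

lemma card_lineChoices_succ_succ (a m n : ℕ) :
    #(lineChoices a (m + 1) (n + 1)) =
      #(lineChoices a m (n + 1)) + #(lineChoices a (m - a) n) := by
  have hm : m ∉ range m := notMem_range_self
  have insert_injOn : Set.InjOn (insert m) (powersetCard n (range m) : Set (Finset ℕ)) := by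
    intro t ht u hu htu
    have hmt : m ∉ t := fun h => hm ((mem_powersetCard.1 ht).1 h)
    have hmu : m ∉ u := fun h => hm ((mem_powersetCard.1 hu).1 h)
    rw [← erase_insert hmt, ← erase_insert hmu, htu]
  rw [lineChoices, range_add_one, powersetCard_succ_insert hm, filter_union, filter_image,
    card_union_of_disjoint,
    card_image_of_injOn (insert_injOn.mono fun _ ht => (mem_filter.1 ht).1),
    filter_pairwise_insert_eq_lineChoices]
  · rfl
  · refine disjoint_left.2 fun s hs hs' => ?_
    obtain ⟨t, -, rfl⟩ := mem_image.1 hs'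
    exact hm ((mem_powersetCard.1 (mem_filter.1 hs).1).1 (mem_insert_self m t))

lemma Nat.choose_succ_sub_mul (a m n : ℕ) :
    (m + 1 - a * n).choose (n + 1) =
      (m - a * n).choose (n + 1) + (m - a - a * (n - 1)).choose n := by
  cases n with
  | zero => simp
  | succ n =>
    rw [Nat.add_sub_cancel, Nat.sub_sub, Nat.add_comm a, ← Nat.mul_add_one]
    rcases le_or_gt (a * (n + 1)) m with h | h
    · rw [Nat.sub_add_comm h, Nat.choose_succ_succ', Nat.add_comm]
    · rw [Nat.sub_eq_zero_of_le h, Nat.sub_eq_zero_of_le h.le]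
      simp

theorem card_lineChoices (a m n : ℕ) : #(lineChoices a m n) = (m - a * (n - 1)).choose n := by
  induction m using Nat.strong_induction_on generalizing n with
  | _ m ih =>
    rcases m with _ | m
    · rcases n with _ | n <;> simp [lineChoices, filter_singleton]
    rcases n with _ | n
    · simp [lineChoices, filter_singleton]
    rw [card_lineChoices_succ_succ, ih m m.lt_succ_self, ih (m - a) (by omega),
      Nat.add_sub_cancel, Nat.choose_succ_sub_mul]

lemma card_lineChoices_eq_card_fin (a k n : ℕ) :
    #(lineChoices a k n) = #{s : Finset (Fin k) | s.card = n ∧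
      ∀ i ∈ s, ∀ j ∈ s, i ≠ j → a < Nat.dist i.val j.val} := by
  rw [lineChoices, ← Nat.Iio_eq_range, ← Fin.map_valEmbedding_univ, powersetCard_map,
    filter_map, card_map, powersetCard_eq_filter, powerset_univ, filter_filter]
  refine congrArg card (filter_congr fun s _ => and_congr_right fun _ => ?_)
  rw [Function.comp_apply, RelEmbedding.coe_toEmbedding, mapEmbedding_apply, coe_map,
    Fin.valEmbedding.injective.injOn.pairwise_image]
  rfl

lemma card_lineChoices_sub_two_mul_add_one {k a n : ℕ} (hn : n ≠ 0) (h : a * n < k) :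
    #(lineChoices a (k - (2 * a + 1)) (n - 1)) = (k - a * n - 1).choose (n - 1) := by
  rw [card_lineChoices]
  rcases n with _ | _ | n
  · contradiction
  · simp
  · congr 1
    rw [Nat.add_sub_cancel, Nat.add_sub_cancel]
    have : a * (n + 1 + 1) = a * n + 2 * a := by ring
    omega

section Circle

lemma val_natCast_add_succ {k a y : ℕ} (hy : y ∈ range (k - (2 * a + 1))) :
    ((y + (a + 1) : ℕ) : ZMod k).val = y + (a + 1) :=
  ZMod.val_cast_of_lt (by have := mem_range.1 hy; omega)

lemma zero_notMem_image_natCast_add {k a : ℕ} {t : Finset ℕ}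
    (ht : t ⊆ range (k - (2 * a + 1))) :
    (0 : ZMod k) ∉ t.image fun y => ((y + (a + 1) : ℕ) : ZMod k) := by
  intro h
  obtain ⟨y, hy, hy0⟩ := mem_image.1 h
  have := congrArg ZMod.val hy0
  rw [val_natCast_add_succ (ht hy), ZMod.val_zero] at this
  omega

variable {k : ℕ} [NeZero k]

lemma circDist_eq_min_val_sub (i j : ZMod k) : circDist k i j = min (i - j).val (j - i).val := by
  rcases eq_or_ne i j with rfl | hne
  · simp [circDist]
  wlog h : j.val < i.val generalizing i j
  · have hval_ne := (ZMod.val_injective k).ne hne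
    rw [min_comm, ← this j i hne.symm (by omega), circDist, circDist, Nat.dist_comm]
  have hsub : (i - j).val = i.val - j.val := ZMod.val_sub h.le
  rw [circDist, Nat.dist_eq_sub_of_le_right h.le, hsub, ← neg_sub, ZMod.neg_val,
    if_neg (sub_ne_zero.2 hne), hsub]

lemma circDist_sub_right (p i j : ZMod k) : circDist k (i - p) (j - p) = circDist k i j := by
  simp only [circDist_eq_min_val_sub, sub_sub_sub_cancel_right]

lemma circDist_comm (i j : ZMod k) : circDist k i j = circDist k j i := by
  rw [circDist, circDist, Nat.dist_comm]

lemma circDist_zero_left (j : ZMod k) : circDist k 0 j = min j.val (k - j.val) := by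
  rw [circDist, ZMod.val_zero, Nat.dist_zero_left]

variable (k) in
def circleChoices (a n : ℕ) : Finset (Finset (ZMod k)) :=
  {S | S.card = n ∧ ∀ i ∈ S, ∀ j ∈ S, i ≠ j → a < circDist k i j}

lemma map_subRight_mem_circleChoices {a n : ℕ} (p : ZMod k) (S : Finset (ZMod k)) :
    S.map (Equiv.subRight p).toEmbedding ∈ circleChoices k a n ↔ S ∈ circleChoices k a n := by
  simp only [circleChoices, mem_filter, mem_univ, true_and, card_map, forall_mem_map,
    Equiv.coe_toEmbedding, Equiv.subRight_apply, ne_eq, sub_left_inj, circDist_sub_right]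

lemma card_filter_mem_circleChoices (a n : ℕ) (p : ZMod k) :
    #{S ∈ circleChoices k a n | p ∈ S} = #{S ∈ circleChoices k a n | 0 ∈ S} := by
  refine card_equiv (Equiv.finsetCongr (Equiv.subRight p)) fun S => ?_
  rw [mem_filter, mem_filter, Equiv.finsetCongr_apply, map_subRight_mem_circleChoices,
    mem_map_equiv]
  simp

lemma val_bounds_of_mem_circleChoices {a n : ℕ} {S : Finset (ZMod k)}
    (hS : S ∈ circleChoices k a n) (h0 : 0 ∈ S) {x : ZMod k} (hx : x ∈ S) (hx0 : x ≠ 0) :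
    a < x.val ∧ x.val + a < k := by
  have := (mem_filter.1 hS).2.2 0 h0 x hx hx0.symm
  rw [circDist_zero_left] at this
  omega

lemma image_erase_zero_mem_lineChoices {a n : ℕ} {S : Finset (ZMod k)}
    (hS : S ∈ circleChoices k a n) (h0 : 0 ∈ S) :
    (S.erase 0).image (fun x => x.val - (a + 1)) ∈ lineChoices a (k - (2 * a + 1)) (n - 1) := by
  have bounds {x} (hx : x ∈ S.erase 0) := val_bounds_of_mem_circleChoices hS h0
    (mem_of_mem_erase hx) (ne_of_mem_erase hx)
  have hinj : Set.InjOn (fun x : ZMod k => x.val - (a + 1)) (S.erase 0 : Set (ZMod k)) := by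
    intro x hx y hy hxy
    have := bounds hx
    have := bounds hy
    exact ZMod.val_injective k (by simp only at hxy; omega)
  refine mem_filter.2 ⟨mem_powersetCard.2 ⟨fun y hy => ?_, ?_⟩, ?_⟩
  · obtain ⟨x, hx, rfl⟩ := mem_image.1 hy
    have := bounds hx
    exact mem_range.2 (by omega)
  · rw [card_image_of_injOn hinj, card_erase_of_mem h0, (mem_filter.1 hS).2.1]
  · rw [coe_image, hinj.pairwise_image]
    intro x hx y hy hxy
    have := bounds hx
    have := bounds hy
    have hsep := (mem_filter.1 hS).2.2 x (mem_of_mem_erase hx) y (mem_of_mem_erase hy) hxy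
    have : circDist k x y ≤ Nat.dist x.val y.val := min_le_left _ _
    simp only [Function.onFun, Nat.dist] at this ⊢
    omega

lemma insert_zero_image_mem_circleChoices {a n : ℕ} (hn : n ≠ 0) {t : Finset ℕ}
    (ht : t ∈ lineChoices a (k - (2 * a + 1)) (n - 1)) :
    insert 0 (t.image fun y => ((y + (a + 1) : ℕ) : ZMod k)) ∈ circleChoices k a n := by
  obtain ⟨hpow, hsep⟩ := mem_filter.1 ht
  obtain ⟨hsub, hcard⟩ := mem_powersetCard.1 hpow
  have hval {y} (hy : y ∈ t) := val_natCast_add_succ (k := k) (a := a) (hsub hy)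
  have hinj : Set.InjOn (fun y => ((y + (a + 1) : ℕ) : ZMod k)) t := by
    intro x hx y hy hxy
    have := congrArg ZMod.val hxy
    simp only [hval hx, hval hy] at this
    omega
  refine mem_filter.2 ⟨mem_univ _, ?_, ?_⟩
  · rw [card_insert_of_notMem (zero_notMem_image_natCast_add hsub), card_image_of_injOn hinj,
      hcard, Nat.sub_add_cancel (by omega)]
  show ((insert 0 _ : Finset (ZMod k)) : Set (ZMod k)).Pairwise _
  rw [coe_insert, Set.pairwise_insert, coe_image, hinj.pairwise_image]
  refine ⟨fun x hx y hy hxy => ?_, ?_⟩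
  · have hxy := hsep hx hy hxy
    have := mem_range.1 (hsub hx)
    have := mem_range.1 (hsub hy)
    simp only [Function.onFun, circDist, hval hx, hval hy, Nat.dist] at hxy ⊢
    omega
  · rw [Set.forall_mem_image]
    intro y hy _
    have := mem_range.1 (hsub hy)
    rw [circDist_comm _ 0, and_self, circDist_zero_left, hval hy]
    omega

lemma card_filter_zero_mem_circleChoices {a n : ℕ} (hn : n ≠ 0) :
    #{S ∈ circleChoices k a n | 0 ∈ S} = #(lineChoices a (k - (2 * a + 1)) (n - 1)) := by
  refine card_nbij' (fun S => (S.erase 0).image fun x => x.val - (a + 1))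
    (fun t => insert 0 (t.image fun y => ((y + (a + 1) : ℕ) : ZMod k)))
    (fun S hS => ?_) (fun t ht => ?_) (fun S hmem => ?_) (fun t ht => ?_)
  · exact image_erase_zero_mem_lineChoices (mem_filter.1 hS).1 (mem_filter.1 hS).2
  · exact mem_filter.2 ⟨insert_zero_image_mem_circleChoices hn ht, mem_insert_self _ _⟩
  · obtain ⟨hS, h0⟩ := mem_filter.1 hmem
    dsimp only
    rw [image_image]
    conv_rhs => rw [← insert_erase h0, ← image_id (s := S.erase 0)]
    refine congrArg (insert 0) (image_congr fun x hx => ?_)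
    have := val_bounds_of_mem_circleChoices hS h0 (mem_of_mem_erase hx) (ne_of_mem_erase hx)
    simp only [Function.comp_apply, id]
    rw [Nat.sub_add_cancel (by omega), ZMod.natCast_zmod_val]
  · have hsub := (mem_powersetCard.1 (mem_filter.1 ht).1).1
    dsimp only
    rw [erase_insert (zero_notMem_image_natCast_add hsub), image_image]
    conv_rhs => rw [← image_id (s := t)]
    refine image_congr fun y hy => ?_
    simp only [Function.comp_apply, id, val_natCast_add_succ (hsub hy), Nat.add_sub_cancel]

lemma card_circleChoices_mul_eq (a n : ℕ) :
    #(circleChoices k a n) * n = k * #{S ∈ circleChoices k a n | 0 ∈ S} := by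
  have := card_mul_eq_card_mul (t := (univ : Finset (ZMod k))) (fun S p => p ∈ S)
    (fun S hS => by rw [bipartiteAbove, filter_mem_eq_inter, univ_inter, (mem_filter.1 hS).2.1])
    (fun p _ => card_filter_mem_circleChoices a n p)
  rwa [card_univ, ZMod.card] at this

theorem sub_mul_card_circleChoices {a n : ℕ} (h : a * n < k) :
    (k - a * n) * #(circleChoices k a n) = k * (k - a * n).choose n := by
  rcases eq_or_ne n 0 with rfl | hn
  · have : circleChoices k a 0 = {∅} := by
      ext S
      simp only [circleChoices, mem_filter, mem_univ, true_and, card_eq_zero, mem_singleton]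
      exact ⟨And.left, fun h => ⟨h, by simp [h]⟩⟩
    simp [this]
  have hcount := card_circleChoices_mul_eq (k := k) a n
  rw [card_filter_zero_mem_circleChoices hn, card_lineChoices_sub_two_mul_add_one hn h] at hcount
  have hchoose := Nat.add_one_mul_choose_eq (k - a * n - 1) (n - 1)
  rw [Nat.sub_add_cancel (by omega), Nat.sub_add_cancel (by omega)] at hchoose
  apply Nat.eq_of_mul_eq_mul_right (Nat.pos_of_ne_zero hn)
  calc (k - a * n) * #(circleChoices k a n) * n
      = (k - a * n) * (k * (k - a * n - 1).choose (n - 1)) := by rw [mul_assoc, hcount]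
    _ = k * (k - a * n).choose n * n := by rw [mul_left_comm, hchoose, mul_assoc]

end Circle

/-- (i) The number of ways to choose `n` of `k` equally spaced points on a line so that
any two chosen points have distance `> a` is `C(k-a(n-1), n)`; (ii) the number of such
choices from `k` equally spaced points on a circle is `(k/(k-an))·C(k-an, n)` when
`k > an`. -/
theorem stmt19 (k n a : ℕ) :
    ((Finset.univ.filter fun s : Finset (Fin k) =>
        s.card = n ∧ ∀ i ∈ s, ∀ j ∈ s, i ≠ j → a < Nat.dist i.val j.val).card =
      (k - a * (n - 1)).choose n) ∧
    (∀ _ : a * n < k, ∀ _ : NeZero k,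
      ((Finset.univ.filter fun s : Finset (ZMod k) =>
          s.card = n ∧ ∀ i ∈ s, ∀ j ∈ s, i ≠ j → a < circDist k i j).card : ℚ) =
        (k : ℚ) / ((k : ℚ) - (a : ℚ) * n) * ((k - a * n).choose n : ℚ)) := by
  refine ⟨(card_lineChoices_eq_card_fin a k n).symm.trans (card_lineChoices a k n),
    fun h _ => ?_⟩
  have hpos : (0 : ℚ) < k - a * n := sub_pos.2 (by exact_mod_cast h)
  have key : ((k - a * n : ℕ) : ℚ) * #(circleChoices k a n) = k * (k - a * n).choose n := by
    exact_mod_cast sub_mul_card_circleChoices h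
  rw [Nat.cast_sub h.le, Nat.cast_mul] at key
  change (#(circleChoices k a n) : ℚ) = _
  rw [div_mul_eq_mul_div, eq_div_iff hpos.ne', ← key, mul_comm]
end
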